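/- Let G = (V, E) be a finite connected graph. Construct the 2-column house allocation instance M_G whose houses are E ∪ V and whose applicants are, for each edge e = {u, v} ∈ E, two applicants with preference lists (e, u) and (e, v). Then: (1) every edge-house e ∈ E is in the image of every Pareto optimal matching of M_G; and (2) the complements within V of images of Pareto optimal matchings are exactly independent sets of G, i.e., for every Pareto optimal matching τ, the set V \ τ(A) is an independent set of G, and conversely every nonempty independent set W of G satisfies: E ∪ (V \ W) is the image of some Pareto optimal matching of M_G. -/

import Mathlib

/-- A 2-column house allocation instance: every applicant has a top house and
a (distinct) second house; only these two houses of its preference list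
matter. -/
structure TwoCol (A B : Type*) where
  h1 : A → B
  h2 : A → B
  distinct : ∀ a, h1 a ≠ h2 a

namespace TwoCol

variable {A B : Type*}

/-- A (partial) matching of a 2-column instance: each applicant receives
either its top house, its second house, or nothing, and no house is given to
two applicants. -/
def IsMatching (M : TwoCol A B) (τ : A → Option B) : Prop :=
  (∀ a b, τ a = some b → b = M.h1 a ∨ b = M.h2 a) ∧
    ∀ a a' b, τ a = some b → τ a' = some b → a = a'

/-- Applicant `a` strictly prefers outcome `x` to outcome `y`
(top house ≻ second house ≻ unassigned). -/
def PrefOpt (M : TwoCol A B) (a : A) (x y : Option B) : Prop :=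
  (x = some (M.h1 a) ∧ y ≠ some (M.h1 a)) ∨ (x = some (M.h2 a) ∧ y = none)

/-- `S` is a blocking coalition of `τ`. -/
def IsBlocking (M : TwoCol A B) (τ : A → Option B) (S : Set A) : Prop :=
  S.Nonempty ∧ ∃ τ' : A → Option B, M.IsMatching τ' ∧
    (∀ a ∉ S, τ' a = τ a) ∧ ∀ a ∈ S, M.PrefOpt a (τ' a) (τ a)

/-- `τ` is a Pareto optimal matching of the 2-column instance `M`. -/
def IsPOM (M : TwoCol A B) (τ : A → Option B) : Prop :=
  M.IsMatching τ ∧ ∀ S : Set A, ¬ M.IsBlocking τ S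

/-- The bipartite row-element graph of a 2-column instance: applicant `a` is
adjacent to house `b` iff `b` is one of `a`'s two listed houses. -/
def graph (M : TwoCol A B) : SimpleGraph (A ⊕ B) where
  Adj x y :=
    (∃ a b, x = Sum.inl a ∧ y = Sum.inr b ∧ (M.h1 a = b ∨ M.h2 a = b)) ∨
    (∃ a b, y = Sum.inl a ∧ x = Sum.inr b ∧ (M.h1 a = b ∨ M.h2 a = b))
  symm := by
    constructor
    rintro x y (⟨a, b, h1, h2, h3⟩ | ⟨a, b, h1, h2, h3⟩)
    · exact Or.inr ⟨a, b, h1, h2, h3⟩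
    · exact Or.inl ⟨a, b, h1, h2, h3⟩
  loopless := ⟨by rintro x (⟨a, b, rfl, h2, _⟩ | ⟨a, b, rfl, h2, _⟩) <;> simp at h2⟩

end TwoCol

/-- The 2-column instance `M_G` associated with a graph `G`: houses are the
edges and the vertices of `G`; for each edge `e` and each endpoint `u` of `e`
there is an applicant with preference list `(e, u)`. -/
def graphInstance {V : Type*} (G : SimpleGraph V) :
    TwoCol {p : Sym2 V × V // p.1 ∈ G.edgeSet ∧ p.2 ∈ p.1} (↥G.edgeSet ⊕ V) where
  h1 p := Sum.inl ⟨p.1.1, p.2.1⟩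
  h2 p := Sum.inr p.1.2
  distinct p := by simp

/-!
Edge-houses are only first choices and vertex-houses only second choices. In a 2-column instance
with this separation a matching is Pareto optimal as soon as every first-choice house is assigned
and every unassigned applicant finds its second choice taken: a member of a blocking coalition
cannot take its first choice, whose holder has nothing better to move to, so every member moves
from nothing to its second choice, which is held outside the coalition. Both conditions are also
necessary, by singleton coalitions.

This gives (1) directly, and (2) because the two applicants of an edge share their first choice, so
one of them needs its vertex-house taken. For an independent set `W ∋ r`, every vertex `x ∉ W`
takes its own house through the edge to a neighbour closer to `r` (these edges are distinct), and
every edge goes to an endpoint not served through it, preferring an endpoint in `W`; then only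
applicants at vertices outside `W` can stay unassigned.
-/

namespace TwoCol

variable {A B : Type*} {M : TwoCol A B} {τ : A → Option B}

theorem not_prefOpt_some_h1 (a : A) (x : Option B) : ¬ M.PrefOpt a x (some (M.h1 a)) := by
  rintro (⟨-, h⟩ | ⟨-, h⟩)
  · exact h rfl
  · exact Option.some_ne_none _ h

theorem IsMatching.update [DecidableEq A] (hτ : M.IsMatching τ) {a : A} {b : B}
    (hb : b = M.h1 a ∨ b = M.h2 a) (hfree : ∀ a', τ a' ≠ some b) :
    M.IsMatching (Function.update τ a (some b)) := by
  constructor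
  · intro x c hc
    by_cases hx : x = a
    · subst hx
      obtain rfl : b = c := Option.some.inj (by simpa using hc)
      exact hb
    · exact hτ.1 x c (by simpa [hx] using hc)
  · intro x y c hx hy
    by_cases hxa : x = a <;> by_cases hya : y = a
    · rw [hxa, hya]
    · subst hxa
      obtain rfl : b = c := Option.some.inj (by simpa using hx)
      exact absurd (by simpa [hya] using hy) (hfree y)
    · subst hya
      obtain rfl : b = c := Option.some.inj (by simpa using hy)
      exact absurd (by simpa [hxa] using hx) (hfree x)
    · exact hτ.2 x y c (by simpa [hxa] using hx) (by simpa [hya] using hy)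

theorem isBlocking_singleton (hτ : M.IsMatching τ) {a : A} {b : B}
    (hb : b = M.h1 a ∨ b = M.h2 a) (hfree : ∀ a', τ a' ≠ some b)
    (hpref : M.PrefOpt a (some b) (τ a)) : M.IsBlocking τ {a} := by
  classical
  refine ⟨Set.singleton_nonempty a, Function.update τ a (some b), hτ.update hb hfree, ?_, ?_⟩
  · exact fun x hx => Function.update_of_ne hx _ _
  · rintro x rfl
    simpa using hpref

theorem IsPOM.exists_eq_some_h1 (hτ : M.IsPOM τ) (a : A) : ∃ a', τ a' = some (M.h1 a) := by
  by_contra! hfree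
  exact hτ.2 {a} (isBlocking_singleton hτ.1 (Or.inl rfl) hfree (Or.inl ⟨rfl, hfree a⟩))

theorem IsPOM.exists_eq_some_h2 (hτ : M.IsPOM τ) {a : A} (ha : τ a ≠ some (M.h1 a)) :
    ∃ a', τ a' = some (M.h2 a) := by
  by_contra! hfree
  have hnone : τ a = none := by
    cases h : τ a with
    | none => rfl
    | some b =>
      rcases hτ.1.1 a b h with rfl | rfl
      exacts [absurd h ha, absurd h (hfree a)]
  exact hτ.2 {a} (isBlocking_singleton hτ.1 (Or.inr rfl) hfree (Or.inr ⟨rfl, hnone⟩))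

theorem isPOM_of_forall_exists (hsep : ∀ a a', M.h1 a ≠ M.h2 a') (hτ : M.IsMatching τ)
    (htop : ∀ a, ∃ a', τ a' = some (M.h1 a))
    (hsecond : ∀ a, τ a = none → ∃ a', τ a' = some (M.h2 a)) : M.IsPOM τ := by
  refine ⟨hτ, ?_⟩
  rintro S ⟨⟨a, haS⟩, τ', hτ', hout, himp⟩
  have hmove : ∀ a ∈ S, τ a = none ∧ τ' a = some (M.h2 a) := by
    intro a ha
    rcases himp a ha with ⟨htop', hne⟩ | hsec
    · obtain ⟨a', ha'⟩ := htop a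
      have ha'top : τ a' = some (M.h1 a') := by
        rcases hτ.1 a' _ ha' with h | h
        · rwa [← h]
        · exact absurd h (hsep a a')
      have ha'S : a' ∉ S := fun h => not_prefOpt_some_h1 a' _ (ha'top ▸ himp a' h)
      obtain rfl : a = a' := hτ'.2 a a' _ htop' ((hout a' ha'S).trans ha')
      exact absurd ha' hne
    · exact hsec.symm
  obtain ⟨hnone, hsec⟩ := hmove a haS
  obtain ⟨a', ha'⟩ := hsecond a hnone
  have ha'S : a' ∉ S := fun h => by simp [(hmove a' h).1] at ha'
  obtain rfl : a = a' := hτ'.2 a a' _ hsec ((hout a' ha'S).trans ha')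
  simp [hnone] at ha'

end TwoCol

namespace SimpleGraph

variable {V : Type*} {G : SimpleGraph V}

theorem Connected.exists_adj_dist_lt (hG : G.Connected) {v r : V} (h : v ≠ r) :
    ∃ u, G.Adj v u ∧ G.dist u r < G.dist v r := by
  obtain ⟨q, hq⟩ := hG.exists_walk_length_eq_dist v r
  cases q with
  | nil => exact absurd rfl h
  | cons hadj q =>
    refine ⟨_, hadj, ?_⟩
    have := G.dist_le q
    rw [Walk.length_cons] at hq
    omega

theorem Connected.exists_injOn_incidenceSet (hG : G.Connected) (r : V) :
    ∃ t : V → Sym2 V, (∀ x ≠ r, t x ∈ G.incidenceSet x) ∧ Set.InjOn t {r}ᶜ := by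
  choose! p hadj hlt using fun x (hx : x ≠ r) => hG.exists_adj_dist_lt hx
  refine ⟨fun x => s(x, p x), fun x hx => ⟨hadj x hx, Sym2.mem_mk_left _ _⟩, ?_⟩
  intro x hx y hy hxy
  rcases Sym2.eq_iff.1 hxy with ⟨hxy, -⟩ | ⟨hx', hy'⟩
  · exact hxy
  · have hx_lt := hlt x hx
    have hy_lt := hlt y hy
    rw [hy'] at hx_lt
    rw [← hx'] at hy_lt
    omega

theorem IsIndepSet.exists_edgeRecipient {W : Set V} (hW : G.IsIndepSet W) {t : V → Sym2 V}
    (ht : Set.InjOn t Wᶜ) {e : Sym2 V} (he : e ∈ G.edgeSet) :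
    ∃ y ∈ e, (y ∉ W → t y ≠ e) ∧ ∀ x ∈ e, x ∈ W → x = y := by
  induction e using Sym2.ind with | h u v => ?_
  rw [mem_edgeSet] at he
  by_cases hu : u ∈ W
  · refine ⟨u, Sym2.mem_mk_left _ _, fun h => absurd hu h, ?_⟩
    rintro x hx hxW
    rcases Sym2.mem_iff.1 hx with rfl | rfl
    exacts [rfl, absurd he (hW hu hxW he.ne)]
  by_cases hv : v ∈ W
  · refine ⟨v, Sym2.mem_mk_right _ _, fun h => absurd hv h, ?_⟩
    rintro x hx hxW
    rcases Sym2.mem_iff.1 hx with rfl | rfl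
    exacts [absurd he.symm (hW hv hxW he.ne.symm), rfl]
  have hnone : ∀ x ∈ s(u, v), x ∉ W := by
    intro x hx
    rcases Sym2.mem_iff.1 hx with rfl | rfl <;> assumption
  by_cases htu : t u = s(u, v)
  · refine ⟨v, Sym2.mem_mk_right _ _, fun _ htv => he.ne (ht hu hv (htu.trans htv.symm)), ?_⟩
    exact fun x hx hxW => absurd hxW (hnone x hx)
  · exact ⟨u, Sym2.mem_mk_left _ _, fun _ => htu, fun x hx hxW => absurd hxW (hnone x hx)⟩

end SimpleGraph

abbrev GraphApplicant {V : Type*} (G : SimpleGraph V) : Type _ :=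
  {p : Sym2 V × V // p.1 ∈ G.edgeSet ∧ p.2 ∈ p.1}

section Construction

variable {V : Type*} {G : SimpleGraph V} {W : Set V} {t : V → Sym2 V} {h : Sym2 V → V}

noncomputable def graphAssignment (G : SimpleGraph V) (W : Set V) (t : V → Sym2 V)
    (h : Sym2 V → V) (a : GraphApplicant G) :
    Option (G.edgeSet ⊕ V) :=
  open Classical in
  if a.1.2 ∉ W ∧ t a.1.2 = a.1.1 then some (.inr a.1.2)
  else if a.1.2 = h a.1.1 then some (.inl ⟨a.1.1, a.2.1⟩) else none

theorem graphAssignment_eq_some {a : GraphApplicant G}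
    {b : G.edgeSet ⊕ V} (hab : graphAssignment G W t h a = some b) :
    (a.1.2 ∉ W ∧ t a.1.2 = a.1.1 ∧ b = .inr a.1.2) ∨
      (a.1.2 = h a.1.1 ∧ b = .inl ⟨a.1.1, a.2.1⟩) := by
  unfold graphAssignment at hab
  split_ifs at hab with h₁ h₂
  · exact .inl ⟨h₁.1, h₁.2, (Option.some.inj hab).symm⟩
  · exact .inr ⟨h₂, (Option.some.inj hab).symm⟩

theorem isMatching_graphAssignment : (graphInstance G).IsMatching (graphAssignment G W t h) := by
  refine ⟨fun a b hab => ?_, fun a a' b ha ha' => ?_⟩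
  · rcases graphAssignment_eq_some hab with ⟨-, -, rfl⟩ | ⟨-, rfl⟩
    exacts [.inr rfl, .inl rfl]
  · apply Subtype.ext
    rcases graphAssignment_eq_some ha with ⟨-, hta, rfl⟩ | ⟨hha, rfl⟩ <;>
      rcases graphAssignment_eq_some ha' with ⟨-, hta', hb⟩ | ⟨hha', hb⟩ <;>
      simp only [reduceCtorEq, Sum.inl.injEq, Sum.inr.injEq, Subtype.mk.injEq] at hb
    · exact Prod.ext (by rw [← hta, ← hta', hb]) hb
    · exact Prod.ext hb (by rw [hha, hha', hb])

theorem graphAssignment_recipient {e : Sym2 V} (he : e ∈ G.edgeSet) (hmem : h e ∈ e)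
    (hnot : h e ∉ W → t (h e) ≠ e) :
    graphAssignment G W t h ⟨(e, h e), he, hmem⟩ = some (.inl ⟨e, he⟩) := by
  unfold graphAssignment
  rw [if_neg (fun hc => hnot hc.1 hc.2), if_pos rfl]

theorem graphAssignment_of_notMem {x : V} (hx : x ∉ W) (ht : t x ∈ G.incidenceSet x) :
    graphAssignment G W t h ⟨(t x, x), ht⟩ = some (.inr x) := by
  unfold graphAssignment
  rw [if_pos ⟨hx, rfl⟩]

theorem notMem_of_graphAssignment_eq_none
    (hW : ∀ e ∈ G.edgeSet, ∀ x ∈ e, x ∈ W → x = h e)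
    {a : GraphApplicant G}
    (ha : graphAssignment G W t h a = none) : a.1.2 ∉ W := by
  intro hx
  unfold graphAssignment at ha
  rw [if_neg (fun hc => hc.1 hx), if_pos (hW _ a.2.1 _ a.2.2 hx)] at ha
  exact Option.some_ne_none _ ha

theorem notMem_iff_exists_graphAssignment_eq_inr (ht : ∀ x ∉ W, t x ∈ G.incidenceSet x)
    (v : V) :
    v ∉ W ↔ ∃ a, graphAssignment G W t h a = some (.inr v) := by
  refine ⟨fun hv => ⟨_, graphAssignment_of_notMem hv (ht v hv)⟩, ?_⟩
  rintro ⟨a, ha⟩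
  rcases graphAssignment_eq_some ha with ⟨hx, -, hb⟩ | ⟨-, hb⟩
  · rwa [Sum.inr.inj hb]
  · cases hb

end Construction

theorem exists_isPOM_graphInstance {V : Type*} {G : SimpleGraph V} (hG : G.Connected)
    {W : Set V} (hW : G.IsIndepSet W) (hne : W.Nonempty) :
    ∃ τ, (graphInstance G).IsPOM τ ∧ (∀ e : G.edgeSet, ∃ a, τ a = some (.inl e)) ∧
      ∀ v : V, v ∉ W ↔ ∃ a, τ a = some (.inr v) := by
  obtain ⟨r, hr⟩ := hne
  obtain ⟨t, hinc, hinj⟩ := hG.exists_injOn_incidenceSet r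
  have hWr : Wᶜ ⊆ {r}ᶜ := Set.compl_subset_compl.2 (Set.singleton_subset_iff.2 hr)
  have ht : ∀ x ∉ W, t x ∈ G.incidenceSet x := fun x hx => hinc x (hWr hx)
  have : Nonempty V := ⟨r⟩
  choose! h hmem hnot hWh using fun e (he : e ∈ G.edgeSet) =>
    hW.exists_edgeRecipient (hinj.mono hWr) he
  have hedges : ∀ e : G.edgeSet, ∃ a, graphAssignment G W t h a = some (.inl e) :=
    fun e => ⟨_, graphAssignment_recipient e.2 (hmem e e.2) (hnot e e.2)⟩
  have hverts := notMem_iff_exists_graphAssignment_eq_inr (h := h) ht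
  refine ⟨_, TwoCol.isPOM_of_forall_exists (fun _ _ => Sum.inl_ne_inr)
    isMatching_graphAssignment (fun a => hedges _) (fun a ha => ?_), hedges, hverts⟩
  exact (hverts _).1 (notMem_of_graphAssignment_eq_none hWh ha)

theorem TwoCol.IsPOM.not_adj_graphInstance {V : Type*} {G : SimpleGraph V}
    {τ : GraphApplicant G → Option (G.edgeSet ⊕ V)}
    (hτ : (graphInstance G).IsPOM τ) {u v : V} (hu : ¬ ∃ a, τ a = some (.inr u))
    (hv : ¬ ∃ a, τ a = some (.inr v)) : ¬ G.Adj u v := by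
  intro huv
  let au : GraphApplicant G := ⟨(s(u, v), u), huv, by simp⟩
  let av : GraphApplicant G := ⟨(s(u, v), v), huv, by simp⟩
  by_cases hau : τ au = some (.inl ⟨s(u, v), huv⟩)
  · refine hv (hτ.exists_eq_some_h2 (a := av) fun hav => huv.ne ?_)
    exact congrArg (fun a => a.1.2) (hτ.1.2 au av _ hau hav)
  · exact hu (hτ.exists_eq_some_h2 hau)

theorem stmt18_general {V : Type*}
    (G : SimpleGraph V) (hconn : G.Connected) :
    (∀ τ, (graphInstance G).IsPOM τ →
      ∀ e : G.edgeSet, ∃ a, τ a = some (Sum.inl e)) ∧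
    (∀ τ, (graphInstance G).IsPOM τ → ∀ u v : V,
      (¬ ∃ a, τ a = some (Sum.inr u)) → (¬ ∃ a, τ a = some (Sum.inr v)) →
      ¬ G.Adj u v) ∧
    (∀ W : Set V, W.Nonempty → (∀ u ∈ W, ∀ v ∈ W, ¬ G.Adj u v) →
      ∃ τ, (graphInstance G).IsPOM τ ∧
        (∀ e : G.edgeSet, ∃ a, τ a = some (Sum.inl e)) ∧
        ∀ v : V, v ∉ W ↔ ∃ a, τ a = some (Sum.inr v)) := by
  refine ⟨fun τ hτ e => ?_, fun τ hτ u v => hτ.not_adj_graphInstance, ?_⟩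
  · exact hτ.exists_eq_some_h1 ⟨(e.1, e.1.out.1), e.2, Sym2.out_fst_mem _⟩
  · exact fun W hne hind =>
      exists_isPOM_graphInstance hconn (fun u hu v hv _ => hind u hu v hv) hne

/-- for a finite connected graph `G`, in the instance `M_G`:
every edge-house is in the image of every POM; for every POM the set of
vertex-houses not in the image is an independent set of `G`; and conversely
for every nonempty independent set `W` of `G` there is a POM whose image is
exactly the edges together with the vertices outside `W`. -/
theorem stmt18 {V : Type*} [Fintype V] [DecidableEq V]
    (G : SimpleGraph V) (hconn : G.Connected) :
    (∀ τ, (graphInstance G).IsPOM τ →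
      ∀ e : G.edgeSet, ∃ a, τ a = some (Sum.inl e)) ∧
    (∀ τ, (graphInstance G).IsPOM τ → ∀ u v : V,
      (¬ ∃ a, τ a = some (Sum.inr u)) → (¬ ∃ a, τ a = some (Sum.inr v)) →
      ¬ G.Adj u v) ∧
    (∀ W : Set V, W.Nonempty → (∀ u ∈ W, ∀ v ∈ W, ¬ G.Adj u v) →
      ∃ τ, (graphInstance G).IsPOM τ ∧
        (∀ e : G.edgeSet, ∃ a, τ a = some (Sum.inl e)) ∧
        ∀ v : V, v ∉ W ↔ ∃ a, τ a = some (Sum.inr v)) :=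
  stmt18_general G hconn
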